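/- arXiv:2502.04136 — 2 statements merged into one kernel-verified Lean document; each statement's English description precedes it below -/
import Mathlib

section
/- For r ≥ 2 and a finite set S with |S| not divisible by r, the number of r-regular permutations of S equals |S| times the number of r-regular permutations of S with one element removed; that is, there is a bijection from Reg_r(S) to the set of pairs (x, π) with x ∈ S and π an r-regular permutation of S \ {x}. -/
/-!
Let `a n` count the `r`-regular permutations of `n` points, and `h n c` the permutations of
`n + 1` points whose cycles avoiding a marked point `∗` are `r`-regular while the cycle through
`∗` has length `≡ c (mod r)`. Removing `∗` from its cycle (`Equiv.Perm.decomposeOption`) gives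
`h n c = [c = 1] a n + n h (n - 1) (c - 1)`, and sorting by the residue at `∗` gives
`a (n + 1) + h n 0 = ∑ c, h n c`. A joint induction with the claim `a n = n a (n - 1)` for
`r ∤ n` shows `h m c = [c = 1] a m + h m (c - 1)` whenever `c ≢ m + 2`. At `c = 0` this is
`h m 0 = h m (-1)` for `r ∤ m + 2`, exactly the cancellation that turns the two recurrences into
`a (m + 2) = (m + 2) a (m + 1)`.
-/

open Equiv Function Finset

theorem Function.minimalPeriod_eq_of_iterate_apply {α β : Type*} {f : α → α} {g : β → β}
    {φ : α → β} (hφ : Injective φ) {x : α} (h : ∀ n, g^[n] (φ x) = φ (f^[n] x)) :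
    minimalPeriod g (φ x) = minimalPeriod f x := by
  rw [minimalPeriod_eq_minimalPeriod_iff]
  intro n
  simp only [IsPeriodicPt, IsFixedPt, h, hφ.eq_iff]

namespace Equiv.Perm

variable {α β : Type*}

theorem SameCycle.minimalPeriod_eq [Finite α] {σ : Perm α} {x y : α} (h : σ.SameCycle x y) :
    minimalPeriod σ y = minimalPeriod σ x := by
  obtain ⟨n, rfl⟩ := h.exists_nat_pow_eq
  rw [← iterate_eq_pow, minimalPeriod_apply_iterate (σ.injective.mem_periodicPts x)]

theorem permCongr_pow_apply (e : α ≃ β) (σ : Perm α) (n : ℕ) (x : α) :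
    (e.permCongr σ ^ n) (e x) = e ((σ ^ n) x) := by
  rw [← e.permCongrHom_coe, ← map_pow, e.permCongrHom_coe, permCongr_apply, symm_apply_apply]

theorem permCongr_zpow_apply (e : α ≃ β) (σ : Perm α) (n : ℤ) (x : α) :
    (e.permCongr σ ^ n) (e x) = e ((σ ^ n) x) := by
  rw [← e.permCongrHom_coe, ← map_zpow, e.permCongrHom_coe, permCongr_apply, symm_apply_apply]

theorem minimalPeriod_permCongr (e : α ≃ β) (σ : Perm α) (x : α) :
    minimalPeriod (e.permCongr σ) (e x) = minimalPeriod σ x :=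
  minimalPeriod_eq_of_iterate_apply e.injective fun n => by
    simp only [iterate_eq_pow, permCongr_pow_apply]

theorem sameCycle_permCongr (e : α ≃ β) (σ : Perm α) (x y : α) :
    (e.permCongr σ).SameCycle (e x) (e y) ↔ σ.SameCycle x y := by
  simp only [SameCycle, permCongr_zpow_apply, e.injective.eq_iff]

theorem minimalPeriod_optionCongr_some (σ : Perm α) (x : α) :
    minimalPeriod σ.optionCongr (some x) = minimalPeriod σ x :=
  minimalPeriod_eq_of_iterate_apply (Option.some_injective α) fun n => by
    induction n with
    | zero => rfl
    | succ n ih => rw [iterate_succ_apply', ih, iterate_succ_apply']; rfl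

theorem minimalPeriod_optionCongr_none (σ : Perm α) :
    minimalPeriod σ.optionCongr none = 1 :=
  minimalPeriod_eq_one_iff_isFixedPt.2 rfl

theorem not_sameCycle_optionCongr_none_some (σ : Perm α) (x : α) :
    ¬ SameCycle σ.optionCongr none (some x) :=
  fun h => Option.some_ne_none x (h.eq_of_left rfl).symm

section Insert

variable [DecidableEq α] (π : Perm α) (b : α)

theorem decomposeOption_symm_some_apply_none :
    decomposeOption.symm (some b, π) none = some b := by
  simp

theorem decomposeOption_symm_some_apply_some (y : α) :
    decomposeOption.symm (some b, π) (some y) = if π y = b then none else some (π y) := by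
  by_cases h : π y = b
  · simp [h]
  · simp [h, swap_apply_of_ne_of_ne]

theorem iterate_decomposeOption_symm_some_none [Finite α] {k : ℕ}
    (hk : k < minimalPeriod π b) :
    (decomposeOption.symm (some b, π))^[k + 1] none = some (π^[k] b) := by
  induction k with
  | zero => exact decomposeOption_symm_some_apply_none π b
  | succ k ih =>
    rw [iterate_succ_apply', ih (by omega), decomposeOption_symm_some_apply_some,
      ← iterate_succ_apply' π, if_neg]
    exact not_isPeriodicPt_of_pos_of_lt_minimalPeriod k.succ_ne_zero hk

theorem minimalPeriod_decomposeOption_symm_some_none [Finite α] :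
    minimalPeriod (decomposeOption.symm (some b, π)) none = minimalPeriod π b + 1 := by
  have hper : IsPeriodicPt (decomposeOption.symm (some b, π)) (minimalPeriod π b + 1) none := by
    obtain ⟨k, hk⟩ : ∃ k, minimalPeriod π b = k + 1 :=
      ⟨_, (Nat.succ_pred_eq_of_pos
        (minimalPeriod_pos_of_mem_periodicPts (π.injective.mem_periodicPts b))).symm⟩
    rw [IsPeriodicPt, IsFixedPt, hk, iterate_succ_apply',
      iterate_decomposeOption_symm_some_none _ _ (by omega), decomposeOption_symm_some_apply_some,
      ← iterate_succ_apply' π, Nat.succ_eq_add_one, ← hk, iterate_minimalPeriod, if_pos rfl]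
  refine le_antisymm (hper.minimalPeriod_le (Nat.succ_pos _)) (Nat.succ_le_of_lt ?_)
  by_contra! hle
  obtain ⟨k, hk⟩ : ∃ k, minimalPeriod (decomposeOption.symm (some b, π)) none = k + 1 :=
    ⟨_, (Nat.succ_pred_eq_of_pos (hper.minimalPeriod_pos (Nat.succ_pos _))).symm⟩
  have := iterate_minimalPeriod (f := decomposeOption.symm (some b, π)) (x := none)
  rw [hk, iterate_decomposeOption_symm_some_none _ _ (by omega)] at this
  exact Option.some_ne_none _ this

theorem iterate_decomposeOption_symm_some_some {y : α} (hy : ¬ π.SameCycle b y) (n : ℕ) :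
    (decomposeOption.symm (some b, π))^[n] (some y) = some (π^[n] y) := by
  induction n with
  | zero => rfl
  | succ n ih =>
    rw [iterate_succ_apply', ih, decomposeOption_symm_some_apply_some, ← iterate_succ_apply' π,
      if_neg]
    rintro hb
    exact hy (by rw [← hb, iterate_eq_pow, sameCycle_pow_left])

theorem minimalPeriod_decomposeOption_symm_some_some {y : α} (hy : ¬ π.SameCycle b y) :
    minimalPeriod (decomposeOption.symm (some b, π)) (some y) = minimalPeriod π y :=
  minimalPeriod_eq_of_iterate_apply (Option.some_injective α)
    (iterate_decomposeOption_symm_some_some π b hy)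

theorem sameCycle_decomposeOption_symm_some_none_some [Finite α] (y : α) :
    SameCycle (decomposeOption.symm (some b, π)) none (some y) ↔ π.SameCycle b y := by
  constructor
  · intro h
    by_contra hy
    obtain ⟨n, hn⟩ := h.symm.exists_nat_pow_eq
    rw [← iterate_eq_pow, iterate_decomposeOption_symm_some_some π b hy] at hn
    exact Option.some_ne_none _ hn
  · intro h
    obtain ⟨n, rfl⟩ := h.exists_nat_pow_eq
    have hpos := minimalPeriod_pos_of_mem_periodicPts (π.injective.mem_periodicPts b)
    rw [← iterate_eq_pow, ← iterate_mod_minimalPeriod_eq,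
      ← iterate_decomposeOption_symm_some_none π b (Nat.mod_lt n hpos), iterate_eq_pow]
    exact sameCycle_pow_right.2 (SameCycle.refl _ _)

end Insert

def IsCycleRegularOff (r : ℕ) (σ : Perm α) (a : α) : Prop :=
  ∀ y, ¬ σ.SameCycle a y → ¬ r ∣ minimalPeriod σ y

variable {r : ℕ}

theorem forall_not_dvd_minimalPeriod_iff [Finite α] {σ : Perm α} (a : α) :
    (∀ x, ¬ r ∣ minimalPeriod σ x) ↔ σ.IsCycleRegularOff r a ∧ ¬ r ∣ minimalPeriod σ a := by
  refine ⟨fun h => ⟨fun y _ => h y, h a⟩, fun ⟨hoff, ha⟩ x => ?_⟩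
  by_cases hx : σ.SameCycle a x
  · rwa [hx.minimalPeriod_eq]
  · exact hoff x hx

theorem isCycleRegularOff_permCongr (e : α ≃ β) (σ : Perm α) (a : α) :
    (e.permCongr σ).IsCycleRegularOff r (e a) ↔ σ.IsCycleRegularOff r a := by
  simp only [IsCycleRegularOff, ← e.forall_congr_right, sameCycle_permCongr,
    minimalPeriod_permCongr]

theorem isCycleRegularOff_optionCongr_none (π : Perm α) :
    IsCycleRegularOff r π.optionCongr none ↔ ∀ y, ¬ r ∣ minimalPeriod π y := by
  simp only [IsCycleRegularOff, Option.forall, SameCycle.refl, not_true_eq_false,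
    false_imp_iff, not_sameCycle_optionCongr_none_some, not_false_eq_true, forall_const,
    minimalPeriod_optionCongr_some, true_and]

theorem isCycleRegularOff_decomposeOption_symm_some [DecidableEq α] [Finite α] (π : Perm α)
    (b : α) : (decomposeOption.symm (some b, π)).IsCycleRegularOff r none ↔
      π.IsCycleRegularOff r b := by
  simp only [IsCycleRegularOff, Option.forall, SameCycle.refl, not_true_eq_false,
    false_imp_iff, sameCycle_decomposeOption_symm_some_none_some, true_and]
  exact forall_congr' fun y => imp_congr_right fun hy => by
    rw [minimalPeriod_decomposeOption_symm_some_some π b hy]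

theorem decomposeOption_symm_none [DecidableEq α] (π : Perm α) :
    decomposeOption.symm (none, π) = π.optionCongr := by
  ext1 x; simp

end Equiv.Perm

theorem Nat.card_subtype_eq_sum_ite {α : Type*} [Fintype α] (p : α → Prop) [DecidablePred p] :
    Nat.card {x // p x} = ∑ x, if p x then 1 else 0 := by
  rw [Nat.card_eq_fintype_card, Fintype.card_subtype, card_filter]

open Equiv.Perm

noncomputable def regularPermCount (r : ℕ) (α : Type*) : ℕ :=
  Nat.card {σ : Perm α // ∀ x, ¬ r ∣ minimalPeriod σ x}

section Counting

variable (r : ℕ) {α β : Type*}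

noncomputable def regularOffPermCount (a : α) (c : ZMod r) : ℕ :=
  Nat.card {σ : Perm α // σ.IsCycleRegularOff r a ∧ (minimalPeriod σ a : ZMod r) = c}

theorem regularPermCount_congr (e : α ≃ β) : regularPermCount r α = regularPermCount r β :=
  Nat.card_congr <| e.permCongr.subtypeEquiv fun σ => by
    simp only [← e.forall_congr_right, minimalPeriod_permCongr]

theorem regularOffPermCount_congr (e : α ≃ β) (a : α) (c : ZMod r) :
    regularOffPermCount r (e a) c = regularOffPermCount r a c :=
  Nat.card_congr <| (e.permCongr.subtypeEquiv fun σ => by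
    rw [isCycleRegularOff_permCongr, minimalPeriod_permCongr]).symm

theorem regularOffPermCount_eq_option_fin [Fintype α] {n : ℕ} (hα : Fintype.card α = n + 1)
    (a : α) (c : ZMod r) :
    regularOffPermCount r a c = regularOffPermCount r (none : Option (Fin n)) c := by
  classical
  have hcard : Fintype.card {y // y ≠ a} = n := by simp [Fintype.card_subtype_compl, hα]
  rw [← regularOffPermCount_congr r
    ((optionSubtypeNe a).symm.trans (optionCongr (Fintype.equivFinOfCardEq hcard)))]
  simp

theorem regularPermCount_add_regularOffPermCount_zero [NeZero r] [Fintype α] (a : α) :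
    regularPermCount r α + regularOffPermCount r a 0 = ∑ c : ZMod r, regularOffPermCount r a c := by
  classical
  simp only [regularPermCount, regularOffPermCount, Nat.card_subtype_eq_sum_ite,
    forall_not_dvd_minimalPeriod_iff a]
  rw [sum_comm, ← sum_add_distrib]
  refine sum_congr rfl fun σ _ => ?_
  by_cases hσ : σ.IsCycleRegularOff r a
  · by_cases hdvd : r ∣ minimalPeriod σ a <;> simp [hσ, hdvd, ZMod.natCast_eq_zero_iff]
  · simp [hσ]

theorem regularOffPermCount_none [Fintype α] [DecidableEq α] (c : ZMod r) :
    regularOffPermCount r (none : Option α) c =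
      (if c = 1 then regularPermCount r α else 0) + ∑ b : α, regularOffPermCount r b (c - 1) := by
  classical
  simp only [regularOffPermCount, regularPermCount, Nat.card_subtype_eq_sum_ite]
  rw [← decomposeOption.symm.sum_comp, Fintype.sum_prod_type, Fintype.sum_option]
  congr 1
  · simp only [decomposeOption_symm_none, isCycleRegularOff_optionCongr_none,
      minimalPeriod_optionCongr_none, Nat.cast_one]
    by_cases hc : c = 1 <;> simp [hc, Ne.symm]
  · refine sum_congr rfl fun b _ => sum_congr rfl fun π _ => ?_
    simp only [isCycleRegularOff_decomposeOption_symm_some,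
      minimalPeriod_decomposeOption_symm_some_none, Nat.cast_succ, ← eq_sub_iff_add_eq]

end Counting

section Recurrence

variable {r : ℕ} {a : ℕ → ℕ} {h : ℕ → ZMod r → ℕ}

theorem apply_eq_apply_sub_one_of_recurrence
    (h_succ : ∀ n c, h n c = (if c = 1 then a n else 0) + n * h (n - 1) (c - 1)) (m : ℕ)
    (ha : ∀ k ≤ m, ¬ r ∣ k → a k = k * a (k - 1)) (c : ZMod r) (hc : c ≠ (m + 2 : ℕ)) :
    h m c = (if c = 1 then a m else 0) + h m (c - 1) := by
  induction m generalizing c with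
  | zero =>
    have hc' : c - 1 ≠ 1 := fun hc1 => hc (by rw [sub_eq_iff_eq_add.1 hc1]; norm_num)
    rw [h_succ 0 c, h_succ 0 (c - 1), if_neg hc']
    simp
  | succ m ih =>
    have hc' : c - 1 ≠ (m + 2 : ℕ) := fun hc1 => hc (by
      rw [sub_eq_iff_eq_add.1 hc1]; push_cast; ring)
    rw [h_succ (m + 1) c, h_succ (m + 1) (c - 1), Nat.add_sub_cancel,
      ih (fun k hk => ha k (by omega)) (c - 1) hc']
    by_cases h2 : c - 1 = 1
    · have hdvd : ¬ r ∣ m + 1 := by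
        rw [← ZMod.natCast_eq_zero_iff]
        intro h0
        apply hc
        rw [sub_eq_iff_eq_add.1 h2]
        push_cast at h0 ⊢
        linear_combination -h0
      rw [if_pos h2, if_pos h2, ha (m + 1) le_rfl hdvd, Nat.add_sub_cancel]
      ring
    · simp only [if_neg h2]; ring

theorem eq_mul_of_recurrence [NeZero r] (hr : r ≠ 1)
    (h_zero : ∀ n, a (n + 1) + h n 0 = ∑ c, h n c)
    (h_succ : ∀ n c, h n c = (if c = 1 then a n else 0) + n * h (n - 1) (c - 1))
    {n : ℕ} (hn : ¬ r ∣ n) : a n = n * a (n - 1) := by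
  have : Nontrivial (ZMod r) := ZMod.nontrivial_iff.2 hr
  have h_sum : ∀ n, ∑ c, h n c = a n + n * ∑ c, h (n - 1) c := fun n => by
    simp_rw [h_succ n, sum_add_distrib, Fintype.sum_ite_eq', mul_sum]
    congr 1
    exact Fintype.sum_equiv (Equiv.subRight 1) _ _ fun _ => rfl
  induction n using Nat.strong_induction_on with
  | _ n ih =>
  match n, hn with
  | 0, hn => exact absurd (dvd_zero r) hn
  | 1, _ =>
    have h1 := h_zero 0
    rw [h_sum 0, h_succ 0 0, if_neg zero_ne_one] at h1
    simpa using h1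
  | m + 2, hn =>
    have hsym : h m 0 = h m (0 - 1) := by
      rw [apply_eq_apply_sub_one_of_recurrence h_succ m (fun k hk hk' => ih k (by omega) hk') 0,
        if_neg zero_ne_one, zero_add]
      rwa [Ne, eq_comm, ZMod.natCast_eq_zero_iff]
    have h1 := h_zero (m + 1)
    rw [h_sum, h_succ (m + 1) 0, Nat.add_sub_cancel, ← h_zero m, if_neg zero_ne_one, ← hsym]
      at h1
    show a (m + 2) = (m + 2) * a (m + 1)
    linarith

end Recurrence

theorem regularPermCount_fin_eq_mul {r : ℕ} [NeZero r] (hr : r ≠ 1) {n : ℕ} (hn : ¬ r ∣ n) :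
    regularPermCount r (Fin n) = n * regularPermCount r (Fin (n - 1)) := by
  refine eq_mul_of_recurrence (a := fun n => regularPermCount r (Fin n))
    (h := fun n c => regularOffPermCount r (none : Option (Fin n)) c)
    hr (fun n => ?_) (fun n c => ?_) hn
  · rw [regularPermCount_congr r (finSuccEquiv n)]
    exact regularPermCount_add_regularOffPermCount_zero r none
  · rw [regularOffPermCount_none]
    rcases n with _ | n
    · simp
    · simp only [regularOffPermCount_eq_option_fin r (Fintype.card_fin (n + 1)), sum_const,
        card_univ, Fintype.card_fin, smul_eq_mul]

theorem stmt2_general (r : ℕ) (hr : 2 ≤ r) {S : Type*} [Fintype S]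
    (hS : ¬ r ∣ Fintype.card S) :
    Nat.card {σ : Equiv.Perm S // ∀ x, ¬ r ∣ Function.minimalPeriod ⇑σ x} =
      Nat.card (Σ x : S, {π : Equiv.Perm {y : S // y ≠ x} //
        ∀ z, ¬ r ∣ Function.minimalPeriod ⇑π z}) := by
  have : NeZero r := ⟨by omega⟩
  classical
  have hfib (x : S) :
      regularPermCount r {y // y ≠ x} = regularPermCount r (Fin (Fintype.card S - 1)) :=
    regularPermCount_congr r (Fintype.equivFinOfCardEq (by simp [Fintype.card_subtype_compl]))
  rw [Nat.card_sigma]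
  change regularPermCount r S = ∑ x : S, regularPermCount r {y // y ≠ x}
  simp only [hfib]
  rw [regularPermCount_congr r (Fintype.equivFin S), sum_const, card_univ, smul_eq_mul]
  exact regularPermCount_fin_eq_mul (by omega) hS

/-- a bijection from `Reg_r(S)` to pairs `(x, π)` with `x ∈ S` and
`π` an `r`-regular permutation of `S \ {x}`. -/
theorem stmt2 (r : ℕ) (hr : 2 ≤ r) {S : Type*} [Fintype S] [DecidableEq S]
    (hS : ¬ r ∣ Fintype.card S) :
    Nat.card {σ : Equiv.Perm S // ∀ x, ¬ r ∣ Function.minimalPeriod ⇑σ x} =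
      Nat.card (Σ x : S, {π : Equiv.Perm {y : S // y ≠ x} //
        ∀ z, ¬ r ∣ Function.minimalPeriod ⇑π z}) :=
  stmt2_general r hr hS
end

section
/- For n ≥ 1 and k ≥ 1, the number of permutations of {1,...,2n+1} whose cycles are all odd except that the cycle containing 1 has even length 2k equals the number of permutations of {1,...,2n+1} with all cycles odd and with 1 in a cycle of length 2k+1; both equal (2n)!/(2n-2k)! · ((2n-2k-1)!!)^2. -/
/-!
Write `o m` for the number of permutations of `m` points all of whose cycles are odd. A
permutation of `N + 1` points whose cycle through `a` has length `K + 1` and whose other cycles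
are odd amounts to the sequence `σ a, …, σ^K a` of distinct points other than `a`, together with
an all-odd permutation of the `N - K` points left over; so there are
`N.descFactorial K * o (N - K)` of them. Sorting the all-odd permutations of `m + 1` points by the
(odd) length of the cycle through `0` gives `o (m + 1) = ∑ⱼ m.descFactorial (2j) * o (m - 2j)`,
hence `o (m + 2) = o (m + 1) + (m + 1) m o m`, and then `o (2t) = ((2t - 1)‼)²` and
`o (2t + 1) = (2t + 1) o (2t)`. The two sets of the theorem are the cases `K = 2k - 1` and
`K = 2k` with `N = 2n`.
-/

open Equiv Function Finset
open scoped Nat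

theorem Function.Semiconj.minimalPeriod_eq {α β : Type*} {fa : α → α} {fb : β → β} {g : α → β}
    (h : Semiconj g fa fb) (hg : Injective g) (x : α) :
    minimalPeriod fb (g x) = minimalPeriod fa x :=
  minimalPeriod_eq_minimalPeriod_iff.2 fun n => by
    simp only [IsPeriodicPt, IsFixedPt, ← h.iterate_right n x, hg.eq_iff]

theorem List.Nodup.card_subtype_notMem {α : Type*} [Fintype α] [DecidableEq α] {l : List α}
    (h : l.Nodup) : Fintype.card {x // x ∉ l} = Fintype.card α - l.length := by
  rw [Fintype.card_subtype_compl, Fintype.card_of_subtype l.toFinset fun _ => List.mem_toFinset,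
    List.toFinset_card_of_nodup h]

namespace Equiv.Perm

variable {α β : Type*}

theorem pow_mod_minimalPeriod_apply (σ : Perm α) (x : α) (i : ℕ) :
    (σ ^ (i % minimalPeriod σ x)) x = (σ ^ i) x := by
  simp only [coe_pow, iterate_mod_minimalPeriod_eq]

theorem pow_apply_eq_pow_apply_iff_of_lt_minimalPeriod {σ : Perm α} {x : α} {i j : ℕ}
    (hi : i < minimalPeriod σ x) (hj : j < minimalPeriod σ x) :
    (σ ^ i) x = (σ ^ j) x ↔ i = j := by
  rw [coe_pow, coe_pow]
  exact iterate_eq_iterate_iff_of_lt_minimalPeriod hi hj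

theorem minimalPeriod_pow_apply [Finite α] (σ : Perm α) (x : α) (i : ℕ) :
    minimalPeriod σ ((σ ^ i) x) = minimalPeriod σ x := by
  rw [coe_pow]
  exact minimalPeriod_apply_iterate (σ.injective.mem_periodicPts x) i

theorem exists_pow_apply_eq_iff_sameCycle [Finite α] {σ : Perm α} {x y : α} :
    (∃ i : ℕ, (σ ^ i) x = y) ↔ σ.SameCycle x y :=
  ⟨fun ⟨i, h⟩ => ⟨i, by rwa [zpow_natCast]⟩, SameCycle.exists_nat_pow_eq⟩

def AllCyclesOdd (σ : Perm α) : Prop := ∀ x, Odd (minimalPeriod σ x)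

def OddAwayFrom (σ : Perm α) (a : α) : Prop :=
  ∀ y, (∀ i : ℕ, (σ ^ i) a ≠ y) → Odd (minimalPeriod σ y)

theorem allCyclesOdd_permCongr_iff (e : α ≃ β) (σ : Perm α) :
    (e.permCongr σ).AllCyclesOdd ↔ σ.AllCyclesOdd := by
  have h : Semiconj e σ (e.permCongr σ) := fun x => by simp [permCongr_apply]
  simp only [AllCyclesOdd, e.surjective.forall, h.minimalPeriod_eq e.injective]

theorem allCyclesOdd_iff [Finite α] {σ : Perm α} (a : α) :
    σ.AllCyclesOdd ↔ Odd (minimalPeriod σ a) ∧ σ.OddAwayFrom a := by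
  refine ⟨fun h => ⟨h a, fun y _ => h y⟩, fun ⟨ha, h⟩ y => ?_⟩
  rcases em (∃ i : ℕ, (σ ^ i) a = y) with ⟨i, rfl⟩ | hy
  · rwa [minimalPeriod_pow_apply]
  · exact h y (not_exists.1 hy)

end Equiv.Perm

open Equiv.Perm

noncomputable def numOddCyclePerms (m : ℕ) : ℕ :=
  Nat.card {σ : Perm (Fin m) // σ.AllCyclesOdd}

theorem card_allCyclesOdd (α : Type*) [Fintype α] :
    Nat.card {σ : Perm α // σ.AllCyclesOdd} = numOddCyclePerms (Fintype.card α) :=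
  Nat.card_congr <| (Fintype.equivFin α).permCongr.subtypeEquiv fun σ =>
    (allCyclesOdd_permCongr_iff _ σ).symm

theorem numOddCyclePerms_zero : numOddCyclePerms 0 = 1 :=
  Nat.card_eq_one_iff_unique.2 ⟨inferInstance, ⟨⟨1, fun x => x.elim0⟩⟩⟩

section CycleList

variable {α : Type*} {a : α} {K : ℕ}

def cycleList (a : α) (s : Fin K ↪ {x // x ≠ a}) : List α :=
  a :: List.ofFn fun i => (s i : α)

variable (s : Fin K ↪ {x // x ≠ a})

@[simp] theorem length_cycleList : (cycleList a s).length = K + 1 := by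
  simp [cycleList]

theorem nodup_cycleList : (cycleList a s).Nodup := by
  simp only [cycleList, List.nodup_cons, List.mem_ofFn, List.nodup_ofFn]
  exact ⟨fun ⟨i, hi⟩ => (s i).2 hi, fun i j h => s.injective (Subtype.ext h)⟩

theorem cycleList_getElem_succ (i : Fin K) : (cycleList a s)[(i : ℕ) + 1] = s i := by
  simp [cycleList]

def orbitEmbedding (σ : Perm α) (hσ : minimalPeriod σ a = K + 1) : Fin K ↪ {x // x ≠ a} where
  toFun i := ⟨(σ ^ ((i : ℕ) + 1)) a, fun h => by
    have := (pow_apply_eq_pow_apply_iff_of_lt_minimalPeriod (j := 0) (by omega) (by omega)).1 h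
    omega⟩
  inj' i j h := Fin.ext <| by
    have := (pow_apply_eq_pow_apply_iff_of_lt_minimalPeriod (by omega) (by omega)).1
      (congrArg Subtype.val h)
    omega

variable {σ : Perm α} (hσ : minimalPeriod σ a = K + 1)

theorem cycleList_orbitEmbedding :
    cycleList a (orbitEmbedding σ hσ) = List.ofFn fun j : Fin (K + 1) => (σ ^ (j : ℕ)) a := by
  rw [List.ofFn_succ]
  rfl

theorem mem_cycleList_orbitEmbedding_iff [Finite α] {x : α} :
    x ∈ cycleList a (orbitEmbedding σ hσ) ↔ σ.SameCycle a x := by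
  rw [cycleList_orbitEmbedding, List.mem_ofFn, ← exists_pow_apply_eq_iff_sameCycle]
  refine ⟨fun ⟨j, hj⟩ => ⟨j, hj⟩, fun ⟨i, hi⟩ => ⟨⟨i % (K + 1), Nat.mod_lt i K.succ_pos⟩, ?_⟩⟩
  show (σ ^ (i % (K + 1))) a = x
  rw [← hi, ← hσ, pow_mod_minimalPeriod_apply]

end CycleList

section CycleExtend

variable {α : Type*} [DecidableEq α] {a : α} {K : ℕ} (s : Fin K ↪ {x // x ≠ a})

def cycleExtend (τ : Perm {x // x ∉ cycleList a s}) : Perm α :=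
  (cycleList a s).formPerm * ofSubtype τ

variable (τ : Perm {x // x ∉ cycleList a s})

theorem cycleExtend_apply_of_mem {x : α} (hx : x ∈ cycleList a s) :
    cycleExtend s τ x = (cycleList a s).formPerm x := by
  rw [cycleExtend, mul_apply, ofSubtype_apply_of_not_mem τ (not_not_intro hx)]

theorem cycleExtend_apply_of_notMem {x : α} (hx : x ∉ cycleList a s) :
    cycleExtend s τ x = τ ⟨x, hx⟩ := by
  rw [cycleExtend, mul_apply, ofSubtype_apply_of_mem τ hx]
  exact List.formPerm_apply_of_notMem (τ ⟨x, hx⟩).2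

theorem cycleExtend_pow_apply_self (i : ℕ) :
    (cycleExtend s τ ^ i) a =
      (cycleList a s)[i % (K + 1)]'(by simpa using Nat.mod_lt i K.succ_pos) := by
  induction i with
  | zero => rfl
  | succ i ih =>
    rw [pow_succ', mul_apply, ih, cycleExtend_apply_of_mem s τ (List.getElem_mem _),
      List.formPerm_apply_getElem _ (nodup_cycleList s)]
    simp only [length_cycleList, Nat.mod_add_mod]

theorem cycleExtend_pow_succ_apply_self (i : Fin K) :
    (cycleExtend s τ ^ ((i : ℕ) + 1)) a = s i := by
  rw [cycleExtend_pow_apply_self, ← cycleList_getElem_succ s i]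
  simp only [Nat.mod_eq_of_lt (Nat.succ_lt_succ i.2)]

theorem minimalPeriod_cycleExtend_self : minimalPeriod (cycleExtend s τ) a = K + 1 := by
  refine Nat.dvd_right_iff_eq.1 fun n => ?_
  rw [← isPeriodicPt_iff_minimalPeriod_dvd, IsPeriodicPt, IsFixedPt, ← coe_pow,
    cycleExtend_pow_apply_self, Nat.dvd_iff_mod_eq_zero]
  exact (nodup_cycleList s).getElem_inj_iff (j := 0) (hj := by simp)

theorem exists_pow_cycleExtend_apply_self_eq_iff {y : α} :
    (∃ i : ℕ, (cycleExtend s τ ^ i) a = y) ↔ y ∈ cycleList a s := by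
  simp only [cycleExtend_pow_apply_self, List.mem_iff_getElem, length_cycleList]
  refine ⟨fun ⟨i, hi⟩ => ⟨_, Nat.mod_lt i K.succ_pos, hi⟩, fun ⟨j, hj, hy⟩ => ⟨j, ?_⟩⟩
  simpa only [Nat.mod_eq_of_lt hj] using hy

theorem minimalPeriod_cycleExtend_of_notMem {y : α} (hy : y ∉ cycleList a s) :
    minimalPeriod (cycleExtend s τ) y = minimalPeriod τ ⟨y, hy⟩ :=
  Semiconj.minimalPeriod_eq (g := Subtype.val)
    (fun z => (cycleExtend_apply_of_notMem s τ z.2).symm) Subtype.val_injective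
    (⟨y, hy⟩ : {x // x ∉ cycleList a s})

theorem cycleExtend_orbitEmbedding_pow_apply_self {σ : Perm α} (hσ : minimalPeriod σ a = K + 1)
    (τ : Perm {x // x ∉ cycleList a (orbitEmbedding σ hσ)}) (i : ℕ) :
    (cycleExtend (orbitEmbedding σ hσ) τ ^ i) a = (σ ^ i) a := by
  simp only [cycleExtend_pow_apply_self, cycleList_orbitEmbedding, List.getElem_ofFn]
  rw [← hσ, pow_mod_minimalPeriod_apply]

end CycleExtend

section Counting

variable {α : Type*} [DecidableEq α] {a : α} {K : ℕ}

def cycleExtendOdd :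
    (Σ s : Fin K ↪ {x // x ≠ a}, {τ : Perm {x // x ∉ cycleList a s} // τ.AllCyclesOdd}) →
      {σ : Perm α // minimalPeriod σ a = K + 1 ∧ σ.OddAwayFrom a} :=
  fun ⟨s, τ, hτ⟩ => ⟨cycleExtend s τ, minimalPeriod_cycleExtend_self s τ, fun y hy => by
    have hy' : y ∉ cycleList a s :=
      mt (exists_pow_cycleExtend_apply_self_eq_iff s τ).2 (not_exists.2 hy)
    rw [minimalPeriod_cycleExtend_of_notMem s τ hy']
    exact hτ _⟩

theorem cycleExtendOdd_injective : Injective (cycleExtendOdd (α := α) (a := a) (K := K)) := by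
  rintro ⟨s, τ, hτ⟩ ⟨s', τ', hτ'⟩ h
  have hσ : cycleExtend s τ = cycleExtend s' τ' := congrArg Subtype.val h
  obtain rfl : s = s' := Embedding.ext fun i => Subtype.ext <| by
    rw [← cycleExtend_pow_succ_apply_self s τ, ← cycleExtend_pow_succ_apply_self s' τ', hσ]
  obtain rfl : τ = τ' := Equiv.ext fun z => Subtype.ext <| by
    rw [← cycleExtend_apply_of_notMem s τ z.2, hσ, cycleExtend_apply_of_notMem]
  rfl

theorem cycleExtendOdd_surjective [Finite α] :
    Surjective (cycleExtendOdd (α := α) (a := a) (K := K)) := by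
  rintro ⟨σ, hσ, hodd⟩
  set s := orbitEmbedding σ hσ
  have hmem (x : α) : x ∈ cycleList a s ↔ σ.SameCycle a x := mem_cycleList_orbitEmbedding_iff hσ
  let τ : Perm {x // x ∉ cycleList a s} :=
    σ.subtypePerm fun x => not_congr <| by rw [hmem, hmem, sameCycle_apply_right]
  have hτ : τ.AllCyclesOdd := fun z => by
    rw [← Semiconj.minimalPeriod_eq (g := Subtype.val) (fun _ => rfl) Subtype.val_injective]
    exact hodd z fun i hi => z.2 ((hmem z).2 (exists_pow_apply_eq_iff_sameCycle.1 ⟨i, hi⟩))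
  refine ⟨⟨s, τ, hτ⟩, Subtype.ext <| Equiv.ext fun x => ?_⟩
  by_cases hx : x ∈ cycleList a s
  · obtain ⟨j, rfl⟩ := exists_pow_apply_eq_iff_sameCycle.2 ((hmem x).1 hx)
    have h := cycleExtend_orbitEmbedding_pow_apply_self hσ τ
    calc cycleExtend s τ ((σ ^ j) a) = (cycleExtend s τ ^ (j + 1)) a := by
          rw [pow_succ', mul_apply, h]
      _ = σ ((σ ^ j) a) := by rw [h, pow_succ', mul_apply]
  · exact cycleExtend_apply_of_notMem s τ hx

theorem card_minimalPeriod_eq_oddAwayFrom [Fintype α] {N : ℕ} (hα : Fintype.card α = N + 1)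
    (a : α) :
    Nat.card {σ : Perm α // minimalPeriod σ a = K + 1 ∧ σ.OddAwayFrom a} =
      N.descFactorial K * numOddCyclePerms (N - K) := by
  rw [← Nat.card_eq_of_bijective _ ⟨cycleExtendOdd_injective, cycleExtendOdd_surjective⟩,
    Nat.card_sigma]
  simp_rw [card_allCyclesOdd, (nodup_cycleList _).card_subtype_notMem, length_cycleList, hα]
  have hne : Fintype.card {x // x ≠ a} = N := by
    rw [Fintype.card_subtype_compl, Fintype.card_subtype_eq, hα, Nat.add_sub_cancel]
  rw [sum_const, card_univ, Fintype.card_embedding_eq, Fintype.card_fin, hne, smul_eq_mul,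
    Nat.add_sub_add_right]

theorem card_minimalPeriod_eq_allCyclesOdd [Fintype α] {N : ℕ} (hα : Fintype.card α = N + 1)
    (a : α) (hK : Even K) :
    Nat.card {σ : Perm α // minimalPeriod σ a = K + 1 ∧ σ.AllCyclesOdd} =
      N.descFactorial K * numOddCyclePerms (N - K) := by
  rw [← card_minimalPeriod_eq_oddAwayFrom hα a]
  refine Nat.card_congr (Equiv.subtypeEquivRight fun σ => ?_)
  rw [allCyclesOdd_iff a]
  exact ⟨fun ⟨h, _, h'⟩ => ⟨h, h'⟩, fun ⟨h, h'⟩ => ⟨h, h ▸ hK.add_one, h'⟩⟩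

end Counting

theorem numOddCyclePerms_succ (m : ℕ) :
    numOddCyclePerms (m + 1) =
      ∑ j ∈ range (m / 2 + 1), m.descFactorial (2 * j) * numOddCyclePerms (m - 2 * j) := by
  classical
  rw [numOddCyclePerms, Nat.card_eq_fintype_card, Fintype.card_subtype,
    card_eq_sum_card_fiberwise (f := fun σ : Perm (Fin (m + 1)) => minimalPeriod σ 0 / 2)
      (t := range (m / 2 + 1))]
  · refine sum_congr rfl fun j _ => ?_
    rw [← card_minimalPeriod_eq_oddAwayFrom (Fintype.card_fin _) 0, Nat.card_eq_fintype_card,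
      Fintype.card_subtype, filter_filter]
    have hp (p : ℕ) : p % 2 = 1 ∧ p / 2 = j ↔ p = 2 * j + 1 := by omega
    refine congrArg card (filter_congr fun σ _ => ?_)
    rw [allCyclesOdd_iff 0, Nat.odd_iff, and_right_comm, hp]
  · intro σ hσ
    have hle := minimalPeriod_le_card (f := ⇑σ) (x := (0 : Fin (m + 1)))
    have hodd := Nat.odd_iff.1 ((mem_filter.1 hσ).2 0)
    simp only [Fintype.card_fin] at hle
    simp only [coe_range, Set.mem_Iio]
    omega

theorem numOddCyclePerms_add_two (m : ℕ) :
    numOddCyclePerms (m + 2) = numOddCyclePerms (m + 1) + (m + 1) * m * numOddCyclePerms m := by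
  rw [numOddCyclePerms_succ (m + 1), sum_range_succ']
  rcases m with _ | m
  · simp
  · rw [show (m + 2) / 2 = m / 2 + 1 by omega, numOddCyclePerms_succ m, mul_sum]
    simp only [mul_zero, Nat.descFactorial_zero, one_mul, Nat.sub_zero]
    rw [add_comm]
    congr 1
    refine sum_congr rfl fun j _ => ?_
    rw [show 2 * (j + 1) = 2 * j + 1 + 1 by ring, Nat.succ_descFactorial_succ,
      Nat.succ_descFactorial_succ, show m + 1 + 1 - (2 * j + 1 + 1) = m - 2 * j by omega]
    ring

theorem numOddCyclePerms_two_mul_and_two_mul_add_one (t : ℕ) :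
    numOddCyclePerms (2 * t) = (2 * t - 1)‼ ^ 2 ∧
      numOddCyclePerms (2 * t + 1) = (2 * t + 1) * numOddCyclePerms (2 * t) := by
  induction t with
  | zero => simp [numOddCyclePerms_succ, numOddCyclePerms_zero]
  | succ t ih =>
    obtain ⟨hev, hodd⟩ := ih
    have hev' : numOddCyclePerms (2 * (t + 1)) = (2 * t + 1) ^ 2 * numOddCyclePerms (2 * t) := by
      rw [show 2 * (t + 1) = 2 * t + 2 by ring, numOddCyclePerms_add_two, hodd]
      ring
    refine ⟨?_, ?_⟩
    · rw [hev', hev, show 2 * (t + 1) - 1 = 2 * t + 1 by omega, Nat.doubleFactorial_add_one]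
      ring
    · rw [show 2 * (t + 1) + 1 = 2 * t + 1 + 2 by ring, numOddCyclePerms_add_two, hodd, hev',
        show 2 * t + 1 + 1 = 2 * (t + 1) by ring, hev']
      ring

theorem stmt8_general (n k : ℕ) (hk : 1 ≤ k) (hkn : k ≤ n) :
    Nat.card {σ : Equiv.Perm (Fin (2 * n + 1)) //
        Function.minimalPeriod ⇑σ (0 : Fin (2 * n + 1)) = 2 * k ∧
          ∀ y, (∀ i : ℕ, (σ ^ i) (0 : Fin (2 * n + 1)) ≠ y) →
            Odd (Function.minimalPeriod ⇑σ y)} =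
      Nat.card {σ : Equiv.Perm (Fin (2 * n + 1)) //
        Function.minimalPeriod ⇑σ (0 : Fin (2 * n + 1)) = 2 * k + 1 ∧
          ∀ y, Odd (Function.minimalPeriod ⇑σ y)} ∧
    Nat.card {σ : Equiv.Perm (Fin (2 * n + 1)) //
        Function.minimalPeriod ⇑σ (0 : Fin (2 * n + 1)) = 2 * k ∧
          ∀ y, (∀ i : ℕ, (σ ^ i) (0 : Fin (2 * n + 1)) ≠ y) →
            Odd (Function.minimalPeriod ⇑σ y)} * Nat.factorial (2 * n - 2 * k) =
      Nat.factorial (2 * n) * (Nat.doubleFactorial (2 * n - 2 * k - 1)) ^ 2 := by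
  obtain ⟨j, rfl⟩ : ∃ j, k = j + 1 := ⟨k - 1, by omega⟩
  obtain ⟨m, rfl⟩ : ∃ m, n = j + 1 + m := ⟨n - (j + 1), by omega⟩
  have hcard := Fintype.card_fin (2 * (j + 1 + m) + 1)
  have hP := card_minimalPeriod_eq_oddAwayFrom hcard 0 (K := 2 * j + 1)
  have hA := card_minimalPeriod_eq_allCyclesOdd hcard 0 (K := 2 * j + 1 + 1) ⟨j + 1, by ring⟩
  unfold OddAwayFrom at hP
  unfold AllCyclesOdd at hA
  obtain ⟨hev, hodd⟩ := numOddCyclePerms_two_mul_and_two_mul_add_one m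
  have hsub : 2 * (j + 1 + m) - (2 * j + 1) = 2 * m + 1 := by omega
  have hfac := Nat.factorial_mul_descFactorial (show 2 * j + 1 ≤ 2 * (j + 1 + m) by omega)
  rw [hsub, Nat.factorial_succ] at hfac
  rw [show 2 * (j + 1) = 2 * j + 1 + 1 by ring, hP, hA, Nat.descFactorial_succ _ (2 * j + 1),
    hsub, show 2 * (j + 1 + m) - (2 * j + 1 + 1) = 2 * m by omega, hodd, hev, ← hfac]
  constructor <;> ring

/-- `|P_{2n+1,2k}| = |A_{2n+1,2k+1}| = (2n)!/(2n-2k)! · ((2n-2k-1)!!)^2`. -/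
theorem stmt8 (n k : ℕ) (hn : 1 ≤ n) (hk : 1 ≤ k) (hkn : k ≤ n) :
    Nat.card {σ : Equiv.Perm (Fin (2 * n + 1)) //
        Function.minimalPeriod ⇑σ (0 : Fin (2 * n + 1)) = 2 * k ∧
          ∀ y, (∀ i : ℕ, (σ ^ i) (0 : Fin (2 * n + 1)) ≠ y) →
            Odd (Function.minimalPeriod ⇑σ y)} =
      Nat.card {σ : Equiv.Perm (Fin (2 * n + 1)) //
        Function.minimalPeriod ⇑σ (0 : Fin (2 * n + 1)) = 2 * k + 1 ∧
          ∀ y, Odd (Function.minimalPeriod ⇑σ y)} ∧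
    Nat.card {σ : Equiv.Perm (Fin (2 * n + 1)) //
        Function.minimalPeriod ⇑σ (0 : Fin (2 * n + 1)) = 2 * k ∧
          ∀ y, (∀ i : ℕ, (σ ^ i) (0 : Fin (2 * n + 1)) ≠ y) →
            Odd (Function.minimalPeriod ⇑σ y)} * Nat.factorial (2 * n - 2 * k) =
      Nat.factorial (2 * n) * (Nat.doubleFactorial (2 * n - 2 * k - 1)) ^ 2 :=
  stmt8_general n k hk hkn
end
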